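/- arXiv:1903.01004 — 5 statements merged into one kernel-verified Lean document; each statement's English description precedes it below -/
import Mathlib

section
/- (Non-contractivity of the Budgeted Bellman Optimality operator) Suppose |A| ≥ 2 and fix a₀ ∈ A. For every ε > 0 define bounded functions Q¹_ε, Q²_ε : S̄×Ā → ℝ² (coordinates written (Q_r, Q_c)) by Q¹_ε(s̄,(a,β_a)) = (0,0) if a = a₀ and (1/γ, ε) otherwise, and Q²_ε(s̄,(a,β_a)) = (0,ε) if a = a₀ and (1/γ, 2ε) otherwise. Then ‖Q¹_ε − Q²_ε‖∞ = ε, the greedy programs needed to evaluate T Q¹_ε and T Q²_ε at states with budget ε have unique solutions, and ‖T Q¹_ε − T Q²_ε‖∞ ≥ 1 = (1/ε)‖Q¹_ε − Q²_ε‖∞. Consequently T admits no Lipschitz constant with respect to ‖·‖∞: it is not a contraction. -/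
/-- A countably-supported probability distribution on `α`. -/
structure CDist (α : Type) where
  p : α → ℝ
  nonneg : ∀ x, 0 ≤ p x
  countable_support : (Function.support p).Countable
  sum_one : ∑' x, p x = 1

/-- Expectation `E_{x∼ρ}[f(x)] = Σ'_x ρ(x) f(x)`. -/
noncomputable def Eexp {α : Type} (ρ : CDist α) (f : α → ℝ) : ℝ := ∑' x, ρ.p x * f x

/-- A function `Q : S̄ × Ā → ℝ²` is bounded (sup-norm wise). -/
def BoundedQ {S A : Type} (Q : (S × ℝ) → (A × ℝ) → ℝ × ℝ) : Prop :=
  ∃ M : ℝ, ∀ sb ab, max |(Q sb ab).1| |(Q sb ab).2| ≤ M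

/-- `ρ` solves the greedy program at `s̄ = (s,β)` for `Q = (Q_r, Q_c)`: among
countably-supported probability distributions on `Ā = A × ℝ` with
`E_{ā∼ρ}[Q_c(s̄,ā)] ≤ β`, it maximizes `E_{ā∼ρ}[Q_r(s̄,ā)]`, and among those
maximizers it minimizes `E_{ā∼ρ}[Q_c(s̄,ā)]`. -/
def IsGreedy {S A : Type} (Q : (S × ℝ) → (A × ℝ) → ℝ × ℝ) (sb : S × ℝ)
    (ρ : CDist (A × ℝ)) : Prop :=
  Eexp ρ (fun ab => (Q sb ab).2) ≤ sb.2 ∧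
  (∀ ρ' : CDist (A × ℝ), Eexp ρ' (fun ab => (Q sb ab).2) ≤ sb.2 →
    Eexp ρ' (fun ab => (Q sb ab).1) ≤ Eexp ρ (fun ab => (Q sb ab).1)) ∧
  (∀ ρ' : CDist (A × ℝ), Eexp ρ' (fun ab => (Q sb ab).2) ≤ sb.2 →
    Eexp ρ' (fun ab => (Q sb ab).1) = Eexp ρ (fun ab => (Q sb ab).1) →
    Eexp ρ (fun ab => (Q sb ab).2) ≤ Eexp ρ' (fun ab => (Q sb ab).2))

/-- `g` is a greedy selection for `Q`: at every augmented state where the greedy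
program admits a solution, `g` is such a solution. -/
def IsSelection {S A : Type} (Q : (S × ℝ) → (A × ℝ) → ℝ × ℝ)
    (g : (S × ℝ) → CDist (A × ℝ)) : Prop :=
  ∀ sb, (∃ ρ, IsGreedy Q sb ρ) → IsGreedy Q sb (g sb)

/-- The Budgeted Bellman Optimality operator (given a greedy selection `g`):
`T Q((s,β),(a,β_a)) = R((s,β),(a,β_a)) + γ Σ_{s'} P(s'|s,a) E_{ā'∼g(s',β_a)}[Q((s',β_a),ā')]`. -/
noncomputable def TQ {S A : Type} [Fintype S]
    (P : S → A → S → ℝ) (Rr Rc : S → A → ℝ) (γ : ℝ)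
    (g : (S × ℝ) → CDist (A × ℝ))
    (Q : (S × ℝ) → (A × ℝ) → ℝ × ℝ) : (S × ℝ) → (A × ℝ) → ℝ × ℝ :=
  fun sb ab => (Rr sb.1 ab.1, Rc sb.1 ab.1) +
    γ • ∑ s' : S, P sb.1 ab.1 s' •
      (Eexp (g (s', ab.2)) (fun ab' => (Q (s', ab.2) ab').1),
       Eexp (g (s', ab.2)) (fun ab' => (Q (s', ab.2) ab').2))

/-- Sup norm `‖Q‖∞` of `Q : S̄ × Ā → ℝ²`. -/
noncomputable def supN {S A : Type} (Q : (S × ℝ) → (A × ℝ) → ℝ × ℝ) : ℝ :=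
  ⨆ p : (S × ℝ) × (A × ℝ), max |(Q p.1 p.2).1| |(Q p.1 p.2).2|

/-!
Take the greedy program at budget `ε`. Under `Q¹_ε` every distribution is feasible, so the
greedy policy avoids `a₀` and collects the value `(1/γ, ε)`; under `Q²_ε` the cost `ε(2 - m)`,
where `m` is the mass put on `a₀`, forces `m = 1`, and the greedy value is `(0, ε)`. Hence
`T Q¹_ε − T Q²_ε` equals `(1, 0)` at every state–action pair with allotted budget `ε`, whereas
`Q¹_ε − Q²_ε ≡ (0, −ε)`. Letting `ε → 0` rules out any Lipschitz constant.
-/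

namespace CDist

variable {α : Type} (ρ : CDist α)

lemma summable : Summable ρ.p := by
  by_contra h
  simpa [tsum_eq_zero_of_not_summable h] using ρ.sum_one

lemma summable_mul_of_abs_le {f : α → ℝ} {C : ℝ} (hf : ∀ x, |f x| ≤ C) :
    Summable fun x => ρ.p x * f x :=
  (ρ.summable.mul_right C).of_norm_bounded fun x => by
    rw [Real.norm_eq_abs, abs_mul, abs_of_nonneg (ρ.nonneg x)]
    exact mul_le_mul_of_nonneg_left (hf x) (ρ.nonneg x)

lemma abs_Eexp_le {f : α → ℝ} {C : ℝ} (hf : ∀ x, |f x| ≤ C) : |Eexp ρ f| ≤ C :=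
  calc |Eexp ρ f| ≤ ∑' x, |ρ.p x * f x| := by
        simpa only [Eexp, Real.norm_eq_abs] using
          norm_tsum_le_tsum_norm (ρ.summable_mul_of_abs_le hf).norm
    _ ≤ ∑' x, ρ.p x * C := by
        refine (ρ.summable_mul_of_abs_le hf).abs.tsum_le_tsum (fun x => ?_)
          (ρ.summable.mul_right C)
        rw [abs_mul, abs_of_nonneg (ρ.nonneg x)]
        exact mul_le_mul_of_nonneg_left (hf x) (ρ.nonneg x)
    _ = C := by rw [tsum_mul_right, ρ.sum_one, one_mul]

noncomputable def dirac [DecidableEq α] (a : α) : CDist α where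
  p x := if x = a then 1 else 0
  nonneg x := by split_ifs <;> norm_num
  countable_support := (Set.countable_singleton a).mono fun x hx => by
    by_contra h
    exact hx (if_neg h)
  sum_one := tsum_ite_eq a 1

lemma Eexp_dirac [DecidableEq α] (a : α) (f : α → ℝ) : Eexp (dirac a) f = f a := by
  simp only [Eexp, dirac, ite_mul, one_mul, zero_mul]
  exact tsum_ite_eq a f

noncomputable def prob (p : α → Prop) [DecidablePred p] : ℝ :=
  Eexp ρ fun x => if p x then 1 else 0

variable (p : α → Prop) [DecidablePred p]

lemma prob_nonneg : 0 ≤ ρ.prob p :=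
  tsum_nonneg fun x => mul_nonneg (ρ.nonneg x) (by dsimp only; split_ifs <;> norm_num)

lemma prob_le_one : ρ.prob p ≤ 1 :=
  (le_abs_self _).trans (ρ.abs_Eexp_le fun x => by split_ifs <;> norm_num)

lemma prob_dirac [DecidableEq α] (a : α) : (dirac a).prob p = if p a then 1 else 0 :=
  Eexp_dirac a _

lemma Eexp_ite (c₁ c₂ : ℝ) :
    Eexp ρ (fun x => if p x then c₁ else c₂) = c₂ + (c₁ - c₂) * ρ.prob p := by
  have hsplit : (fun x => ρ.p x * if p x then c₁ else c₂)
      = fun x => c₂ * ρ.p x + (c₁ - c₂) * (ρ.p x * if p x then 1 else 0) := by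
    funext x
    split_ifs <;> ring
  have hind : Summable fun x => ρ.p x * if p x then (1 : ℝ) else 0 :=
    ρ.summable_mul_of_abs_le (C := 1) fun x => by split_ifs <;> norm_num
  rw [Eexp, hsplit, (ρ.summable.mul_left c₂).tsum_add (hind.mul_left _), tsum_mul_left,
    tsum_mul_left, ρ.sum_one, mul_one, prob, Eexp]

end CDist

lemma boundedQ_iff_norm {S A : Type} (Q : (S × ℝ) → (A × ℝ) → ℝ × ℝ) :
    BoundedQ Q ↔ ∃ M : ℝ, ∀ sb ab, ‖Q sb ab‖ ≤ M := by
  simp only [BoundedQ, Prod.norm_def, Real.norm_eq_abs]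

lemma supN_eq_iSup_norm {S A : Type} (Q : (S × ℝ) → (A × ℝ) → ℝ × ℝ) :
    supN Q = ⨆ p : (S × ℝ) × (A × ℝ), ‖Q p.1 p.2‖ := by
  simp only [supN, Prod.norm_def, Real.norm_eq_abs]

lemma norm_le_supN {S A : Type} {Q : (S × ℝ) → (A × ℝ) → ℝ × ℝ} (hQ : BoundedQ Q)
    (sb : S × ℝ) (ab : A × ℝ) : ‖Q sb ab‖ ≤ supN Q := by
  obtain ⟨M, hM⟩ := (boundedQ_iff_norm Q).1 hQ
  rw [supN_eq_iSup_norm]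
  exact le_ciSup (f := fun p : (S × ℝ) × (A × ℝ) => ‖Q p.1 p.2‖)
    ⟨M, by rintro _ ⟨p, rfl⟩; exact hM p.1 p.2⟩ (sb, ab)

lemma norm_sum_smul_le_of_forall_norm_le {ι E : Type*} [Fintype ι] [SeminormedAddCommGroup E]
    [NormedSpace ℝ E] {w : ι → ℝ} (hw₀ : ∀ i, 0 ≤ w i) (hw₁ : ∑ i, w i = 1) {v : ι → E}
    {C : ℝ} (hv : ∀ i, ‖v i‖ ≤ C) : ‖∑ i, w i • v i‖ ≤ C :=
  mem_closedBall_zero_iff.1 <| (convex_closedBall 0 C).sum_mem (fun i _ => hw₀ i) hw₁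
    fun i _ => mem_closedBall_zero_iff.2 (hv i)

section Bellman

variable {S A : Type}

noncomputable def expectedQ (ρ : CDist (A × ℝ)) (Q : (S × ℝ) → (A × ℝ) → ℝ × ℝ)
    (sb : S × ℝ) : ℝ × ℝ :=
  (Eexp ρ fun ab => (Q sb ab).1, Eexp ρ fun ab => (Q sb ab).2)

lemma norm_expectedQ_le (ρ : CDist (A × ℝ)) {Q : (S × ℝ) → (A × ℝ) → ℝ × ℝ} {sb : S × ℝ}
    {M : ℝ} (hQ : ∀ ab, ‖Q sb ab‖ ≤ M) : ‖expectedQ ρ Q sb‖ ≤ M := by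
  rw [Prod.norm_def, Real.norm_eq_abs, Real.norm_eq_abs]
  exact max_le (ρ.abs_Eexp_le fun ab => (norm_fst_le _).trans (hQ ab))
    (ρ.abs_Eexp_le fun ab => (norm_snd_le _).trans (hQ ab))

variable [Fintype S] (P : S → A → S → ℝ) (Rr Rc : S → A → ℝ) (γ : ℝ)

lemma TQ_sub_TQ (g g' : (S × ℝ) → CDist (A × ℝ)) (Q Q' : (S × ℝ) → (A × ℝ) → ℝ × ℝ)
    (sb : S × ℝ) (ab : A × ℝ) :
    TQ P Rr Rc γ g Q sb ab - TQ P Rr Rc γ g' Q' sb ab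
      = γ • ∑ s', P sb.1 ab.1 s' •
          (expectedQ (g (s', ab.2)) Q (s', ab.2) - expectedQ (g' (s', ab.2)) Q' (s', ab.2)) := by
  simp only [TQ, expectedQ, smul_sub, Finset.sum_sub_distrib, add_sub_add_left_eq_sub]

lemma boundedQ_TQ_sub_TQ (hP₀ : ∀ s a s', 0 ≤ P s a s') (hP₁ : ∀ s a, ∑ s', P s a s' = 1)
    (hγ : 0 ≤ γ) {g g' : (S × ℝ) → CDist (A × ℝ)} {Q Q' : (S × ℝ) → (A × ℝ) → ℝ × ℝ}
    (hQ : BoundedQ Q) (hQ' : BoundedQ Q') :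
    BoundedQ fun sb ab => TQ P Rr Rc γ g Q sb ab - TQ P Rr Rc γ g' Q' sb ab := by
  obtain ⟨M, hM⟩ := (boundedQ_iff_norm Q).1 hQ
  obtain ⟨M', hM'⟩ := (boundedQ_iff_norm Q').1 hQ'
  refine (boundedQ_iff_norm _).2 ⟨γ * (M + M'), fun sb ab => ?_⟩
  rw [TQ_sub_TQ, norm_smul, Real.norm_of_nonneg hγ]
  gcongr
  exact norm_sum_smul_le_of_forall_norm_le (hP₀ _ _) (hP₁ _ _) fun s' =>
    (norm_sub_le _ _).trans
      (add_le_add (norm_expectedQ_le _ (hM _)) (norm_expectedQ_le _ (hM' _)))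

end Bellman

section Counterexample

variable {S A : Type} [DecidableEq A] (a₀ : A) (r c : ℝ)

/-- `Q¹_ε` of the paper, with `r = 1/γ` and `c = ε`. -/
def Q₁ : (S × ℝ) → (A × ℝ) → ℝ × ℝ := fun _ ab => if ab.1 = a₀ then (0, 0) else (r, c)

/-- `Q²_ε` of the paper, with `r = 1/γ` and `c = ε`. -/
def Q₂ : (S × ℝ) → (A × ℝ) → ℝ × ℝ := fun _ ab => if ab.1 = a₀ then (0, c) else (r, 2 * c)

lemma boundedQ_Q₁ : BoundedQ (Q₁ (S := S) a₀ r c) :=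
  ⟨max |r| |c|, fun _ ab => by unfold Q₁; split_ifs <;> simp⟩

lemma boundedQ_Q₂ : BoundedQ (Q₂ (S := S) a₀ r c) :=
  ⟨|r| + 2 * |c|, fun _ ab => by
    unfold Q₂
    split_ifs <;> simp [abs_mul]
    linarith [abs_nonneg r, abs_nonneg c]⟩

lemma supN_Q₁_sub_Q₂ [Nonempty S] :
    supN (fun sb ab => Q₁ (S := S) a₀ r c sb ab - Q₂ a₀ r c sb ab) = |c| := by
  have : Nonempty A := ⟨a₀⟩
  have hsub : ∀ (sb : S × ℝ) (ab : A × ℝ), Q₁ a₀ r c sb ab - Q₂ a₀ r c sb ab = (0, -c) := by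
    intro sb ab
    unfold Q₁ Q₂
    split_ifs <;> ext <;> simp
    ring
  simp [supN, hsub]

variable (sb : S × ℝ) (ρ : CDist (A × ℝ))

lemma Eexp_Q₁_fst :
    Eexp ρ (fun ab => (Q₁ a₀ r c sb ab).1) = r * (1 - ρ.prob (·.1 = a₀)) := by
  simp only [Q₁, apply_ite Prod.fst, CDist.Eexp_ite]
  ring

lemma Eexp_Q₁_snd :
    Eexp ρ (fun ab => (Q₁ a₀ r c sb ab).2) = c * (1 - ρ.prob (·.1 = a₀)) := by
  simp only [Q₁, apply_ite Prod.snd, CDist.Eexp_ite]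
  ring

lemma Eexp_Q₂_fst :
    Eexp ρ (fun ab => (Q₂ a₀ r c sb ab).1) = r * (1 - ρ.prob (·.1 = a₀)) := by
  simp only [Q₂, apply_ite Prod.fst, CDist.Eexp_ite]
  ring

lemma Eexp_Q₂_snd :
    Eexp ρ (fun ab => (Q₂ a₀ r c sb ab).2) = c * (2 - ρ.prob (·.1 = a₀)) := by
  simp only [Q₂, apply_ite Prod.snd, CDist.Eexp_ite]
  ring

lemma isGreedy_Q₁_iff (hr : 0 < r) {a₁ : A} (ha : a₁ ≠ a₀) (s : S) :
    IsGreedy (Q₁ a₀ r c) (s, c) ρ ↔ ρ.prob (·.1 = a₀) = 0 := by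
  simp only [IsGreedy, Eexp_Q₁_fst, Eexp_Q₁_snd]
  have hm := ρ.prob_nonneg (·.1 = a₀)
  constructor
  · rintro ⟨-, hmax, -⟩
    have hdirac := hmax (CDist.dirac (a₁, 0)) (by simp [CDist.prob_dirac, ha])
    simp only [CDist.prob_dirac, ha, if_false] at hdirac
    nlinarith
  · intro h0
    refine ⟨by simp [h0], fun ρ' _ => ?_, fun ρ' _ heq => ?_⟩
    · nlinarith [ρ'.prob_nonneg (·.1 = a₀)]
    · have : ρ'.prob (·.1 = a₀) = 0 := by
        rw [h0] at heq
        nlinarith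
      simp [h0, this]

lemma Eexp_Q₂_snd_le_iff (hc : 0 < c) :
    Eexp ρ (fun ab => (Q₂ a₀ r c sb ab).2) ≤ c ↔ ρ.prob (·.1 = a₀) = 1 := by
  rw [Eexp_Q₂_snd]
  have := ρ.prob_le_one (·.1 = a₀)
  constructor
  · intro h
    nlinarith
  · intro h
    norm_num [h]

lemma isGreedy_Q₂_iff (hc : 0 < c) (s : S) :
    IsGreedy (Q₂ a₀ r c) (s, c) ρ ↔ ρ.prob (·.1 = a₀) = 1 := by
  refine ⟨fun h => (Eexp_Q₂_snd_le_iff a₀ r c _ ρ hc).1 h.1, fun h => ?_⟩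
  have hfeas := (Eexp_Q₂_snd_le_iff a₀ r c (s, c) · hc)
  refine ⟨(hfeas ρ).2 h, fun ρ' h' => ?_, fun ρ' h' _ => ?_⟩
  · rw [Eexp_Q₂_fst, Eexp_Q₂_fst, h, (hfeas ρ').1 h']
  · rw [Eexp_Q₂_snd, Eexp_Q₂_snd, h, (hfeas ρ').1 h']

lemma isGreedy_Q₁_dirac (hr : 0 < r) {a₁ : A} (ha : a₁ ≠ a₀) (s : S) :
    IsGreedy (Q₁ a₀ r c) (s, c) (.dirac (a₁, 0)) :=
  (isGreedy_Q₁_iff a₀ r c _ hr ha s).2 (by simp [CDist.prob_dirac, ha])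

lemma isGreedy_Q₂_dirac (hc : 0 < c) (s : S) : IsGreedy (Q₂ a₀ r c) (s, c) (.dirac (a₀, 0)) :=
  (isGreedy_Q₂_iff a₀ r c _ hc s).2 (by simp [CDist.prob_dirac])

lemma expectedQ_Q₁_of_isGreedy (hr : 0 < r) {a₁ : A} (ha : a₁ ≠ a₀) (s : S)
    (hρ : IsGreedy (Q₁ a₀ r c) (s, c) ρ) : expectedQ ρ (Q₁ a₀ r c) (s, c) = (r, c) := by
  simp [expectedQ, Eexp_Q₁_fst, Eexp_Q₁_snd, (isGreedy_Q₁_iff a₀ r c ρ hr ha s).1 hρ]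

lemma expectedQ_Q₂_of_isGreedy (hc : 0 < c) (s : S)
    (hρ : IsGreedy (Q₂ a₀ r c) (s, c) ρ) : expectedQ ρ (Q₂ a₀ r c) (s, c) = (0, c) := by
  norm_num [expectedQ, Eexp_Q₂_fst, Eexp_Q₂_snd, (isGreedy_Q₂_iff a₀ r c ρ hc s).1 hρ]

end Counterexample

lemma one_le_supN_TQ_Q₁_sub_TQ_Q₂ {S A : Type} [Fintype S] [Nonempty S] [DecidableEq A]
    (P : S → A → S → ℝ) (hP₀ : ∀ s a s', 0 ≤ P s a s') (hP₁ : ∀ s a, ∑ s', P s a s' = 1)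
    (Rr Rc : S → A → ℝ) {γ : ℝ} (hγ : 0 < γ) {a₀ a₁ : A} (ha : a₁ ≠ a₀) {ε : ℝ} (hε : 0 < ε)
    {g₁ g₂ : (S × ℝ) → CDist (A × ℝ)} (hg₁ : IsSelection (Q₁ a₀ (1 / γ) ε) g₁)
    (hg₂ : IsSelection (Q₂ a₀ (1 / γ) ε) g₂) :
    1 ≤ supN fun sb ab =>
      TQ P Rr Rc γ g₁ (Q₁ a₀ (1 / γ) ε) sb ab - TQ P Rr Rc γ g₂ (Q₂ a₀ (1 / γ) ε) sb ab := by
  have hr : 0 < 1 / γ := by positivity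
  have hV₁ (s : S) : expectedQ (g₁ (s, ε)) (Q₁ a₀ (1 / γ) ε) (s, ε) = (1 / γ, ε) :=
    expectedQ_Q₁_of_isGreedy a₀ _ ε _ hr ha s <| hg₁ (s, ε)
      ⟨_, isGreedy_Q₁_dirac a₀ _ ε hr ha s⟩
  have hV₂ (s : S) : expectedQ (g₂ (s, ε)) (Q₂ a₀ (1 / γ) ε) (s, ε) = (0, ε) :=
    expectedQ_Q₂_of_isGreedy a₀ _ ε _ hε s <| hg₂ (s, ε)
      ⟨_, isGreedy_Q₂_dirac a₀ _ ε hε s⟩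
  obtain ⟨s⟩ := ‹Nonempty S›
  have hgap : TQ P Rr Rc γ g₁ (Q₁ a₀ (1 / γ) ε) (s, 0) (a₀, ε)
      - TQ P Rr Rc γ g₂ (Q₂ a₀ (1 / γ) ε) (s, 0) (a₀, ε) = (1, 0) := by
    rw [TQ_sub_TQ]
    simp only [hV₁, hV₂, ← Finset.sum_smul, hP₁, one_smul]
    ext <;> simp [hγ.ne']
  calc (1 : ℝ) = ‖((1, 0) : ℝ × ℝ)‖ := by simp
    _ ≤ _ := hgap ▸ norm_le_supN (boundedQ_TQ_sub_TQ P Rr Rc γ hP₀ hP₁ hγ.le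
        (boundedQ_Q₁ a₀ _ ε) (boundedQ_Q₂ a₀ _ ε)) (s, 0) (a₀, ε)

theorem bellman_optimality_not_contraction_general
    {S A : Type} [Fintype S] [Fintype A] [Nonempty S] [DecidableEq A]
    (P : S → A → S → ℝ) (hP0 : ∀ s a s', 0 ≤ P s a s') (hP1 : ∀ s a, ∑ s', P s a s' = 1)
    (Rr Rc : S → A → ℝ) (γ : ℝ) (hγ0 : 0 < γ)
    (a0 : A) (hA : 2 ≤ Fintype.card A)
    (ε : ℝ) (hε : 0 < ε)
    (Q1 Q2 : (S × ℝ) → (A × ℝ) → ℝ × ℝ)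
    (hQ1 : Q1 = fun _ ab => if ab.1 = a0 then ((0 : ℝ), (0 : ℝ)) else (1 / γ, ε))
    (hQ2 : Q2 = fun _ ab => if ab.1 = a0 then ((0 : ℝ), ε) else (1 / γ, 2 * ε)) :
    supN (fun sb ab => Q1 sb ab - Q2 sb ab) = ε ∧
    (∀ s' : S,
      ((∃ ρ, IsGreedy Q1 (s', ε) ρ) ∧
        ∀ ρ ρ', IsGreedy Q1 (s', ε) ρ → IsGreedy Q1 (s', ε) ρ' →
          Eexp ρ (fun ab => (Q1 (s', ε) ab).1) = Eexp ρ' (fun ab => (Q1 (s', ε) ab).1) ∧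
          Eexp ρ (fun ab => (Q1 (s', ε) ab).2) = Eexp ρ' (fun ab => (Q1 (s', ε) ab).2)) ∧
      ((∃ ρ, IsGreedy Q2 (s', ε) ρ) ∧
        ∀ ρ ρ', IsGreedy Q2 (s', ε) ρ → IsGreedy Q2 (s', ε) ρ' →
          Eexp ρ (fun ab => (Q2 (s', ε) ab).1) = Eexp ρ' (fun ab => (Q2 (s', ε) ab).1) ∧
          Eexp ρ (fun ab => (Q2 (s', ε) ab).2) = Eexp ρ' (fun ab => (Q2 (s', ε) ab).2))) ∧
    (∀ g1 g2 : (S × ℝ) → CDist (A × ℝ), IsSelection Q1 g1 → IsSelection Q2 g2 →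
      1 ≤ supN (fun sb ab => TQ P Rr Rc γ g1 Q1 sb ab - TQ P Rr Rc γ g2 Q2 sb ab) ∧
      (1 : ℝ) = (1 / ε) * supN (fun sb ab => Q1 sb ab - Q2 sb ab)) ∧
    (∀ T' : ((S × ℝ) → (A × ℝ) → ℝ × ℝ) → ((S × ℝ) → (A × ℝ) → ℝ × ℝ),
      (∀ Q, BoundedQ Q → ∃ g, IsSelection Q g ∧ T' Q = TQ P Rr Rc γ g Q) →
      ¬ ∃ L : ℝ, ∀ Qa Qb, BoundedQ Qa → BoundedQ Qb →
        supN (fun sb ab => T' Qa sb ab - T' Qb sb ab)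
          ≤ L * supN (fun sb ab => Qa sb ab - Qb sb ab)) := by
  obtain ⟨a1, ha⟩ := Fintype.exists_ne_of_one_lt_card hA a0
  obtain rfl : Q1 = Q₁ a0 (1 / γ) ε := hQ1
  obtain rfl : Q2 = Q₂ a0 (1 / γ) ε := hQ2
  have hdist {ε' : ℝ} (hε' : 0 < ε') :
      supN (fun sb ab => Q₁ (S := S) a0 (1 / γ) ε' sb ab - Q₂ a0 (1 / γ) ε' sb ab) = ε' :=
    (supN_Q₁_sub_Q₂ a0 _ ε').trans (abs_of_pos hε')
  have hr : 0 < 1 / γ := by positivity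
  refine ⟨hdist hε, fun s => ⟨⟨?_, fun ρ ρ' hρ hρ' => ?_⟩, ⟨?_, fun ρ ρ' hρ hρ' => ?_⟩⟩,
    fun g1 g2 hg1 hg2 => ⟨one_le_supN_TQ_Q₁_sub_TQ_Q₂ P hP0 hP1 Rr Rc hγ0 ha hε hg1 hg2, ?_⟩, ?_⟩
  · exact ⟨_, isGreedy_Q₁_dirac a0 _ ε hr ha s⟩
  · exact Prod.ext_iff.1 <| (expectedQ_Q₁_of_isGreedy a0 _ ε ρ hr ha s hρ).trans
      (expectedQ_Q₁_of_isGreedy a0 _ ε ρ' hr ha s hρ').symm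
  · exact ⟨_, isGreedy_Q₂_dirac a0 _ ε hε s⟩
  · exact Prod.ext_iff.1 <| (expectedQ_Q₂_of_isGreedy a0 _ ε ρ hε s hρ).trans
      (expectedQ_Q₂_of_isGreedy a0 _ ε ρ' hε s hρ').symm
  · rw [hdist hε, one_div_mul_cancel hε.ne']
  · rintro T' hT' ⟨L, hL⟩
    set ε' : ℝ := 1 / (|L| + 1)
    have hε' : 0 < ε' := by positivity
    obtain ⟨g1, hg1, hT1⟩ := hT' _ (boundedQ_Q₁ a0 (1 / γ) ε')
    obtain ⟨g2, hg2, hT2⟩ := hT' _ (boundedQ_Q₂ a0 (1 / γ) ε')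
    have hLip := hL _ _ (boundedQ_Q₁ a0 (1 / γ) ε') (boundedQ_Q₂ a0 (1 / γ) ε')
    rw [hT1, hT2, hdist hε'] at hLip
    have hgap := one_le_supN_TQ_Q₁_sub_TQ_Q₂ P hP0 hP1 Rr Rc hγ0 ha hε' hg1 hg2
    have hsmall : L * ε' < 1 := by
      rw [mul_one_div, div_lt_one (by positivity)]
      linarith [le_abs_self L]
    linarith

/-- (Non-contractivity of the Budgeted Bellman Optimality operator.) With `|A| ≥ 2`,
`a₀ ∈ A` and `ε > 0`, the functions `Q¹_ε, Q²_ε` defined in the statement satisfy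
`‖Q¹_ε − Q²_ε‖∞ = ε`; the greedy programs needed to evaluate `T Q¹_ε` and `T Q²_ε`
at states with budget `ε` have solutions with uniquely determined values; and
`‖T Q¹_ε − T Q²_ε‖∞ ≥ 1 = (1/ε)‖Q¹_ε − Q²_ε‖∞`. Consequently, any operator `T'`
implementing the Budgeted Bellman Optimality operator admits no Lipschitz constant
with respect to `‖·‖∞`: it is not a contraction. -/
theorem bellman_optimality_not_contraction
    {S A : Type} [Fintype S] [Fintype A] [Nonempty S] [Nonempty A] [DecidableEq A]
    (P : S → A → S → ℝ) (hP0 : ∀ s a s', 0 ≤ P s a s') (hP1 : ∀ s a, ∑ s', P s a s' = 1)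
    (Rr Rc : S → A → ℝ) (γ : ℝ) (hγ0 : 0 < γ) (hγ1 : γ < 1)
    (a0 : A) (hA : 2 ≤ Fintype.card A)
    (ε : ℝ) (hε : 0 < ε)
    (Q1 Q2 : (S × ℝ) → (A × ℝ) → ℝ × ℝ)
    (hQ1 : Q1 = fun _ ab => if ab.1 = a0 then ((0 : ℝ), (0 : ℝ)) else (1 / γ, ε))
    (hQ2 : Q2 = fun _ ab => if ab.1 = a0 then ((0 : ℝ), ε) else (1 / γ, 2 * ε)) :
    supN (fun sb ab => Q1 sb ab - Q2 sb ab) = ε ∧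
    (∀ s' : S,
      ((∃ ρ, IsGreedy Q1 (s', ε) ρ) ∧
        ∀ ρ ρ', IsGreedy Q1 (s', ε) ρ → IsGreedy Q1 (s', ε) ρ' →
          Eexp ρ (fun ab => (Q1 (s', ε) ab).1) = Eexp ρ' (fun ab => (Q1 (s', ε) ab).1) ∧
          Eexp ρ (fun ab => (Q1 (s', ε) ab).2) = Eexp ρ' (fun ab => (Q1 (s', ε) ab).2)) ∧
      ((∃ ρ, IsGreedy Q2 (s', ε) ρ) ∧
        ∀ ρ ρ', IsGreedy Q2 (s', ε) ρ → IsGreedy Q2 (s', ε) ρ' →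
          Eexp ρ (fun ab => (Q2 (s', ε) ab).1) = Eexp ρ' (fun ab => (Q2 (s', ε) ab).1) ∧
          Eexp ρ (fun ab => (Q2 (s', ε) ab).2) = Eexp ρ' (fun ab => (Q2 (s', ε) ab).2))) ∧
    (∀ g1 g2 : (S × ℝ) → CDist (A × ℝ), IsSelection Q1 g1 → IsSelection Q2 g2 →
      1 ≤ supN (fun sb ab => TQ P Rr Rc γ g1 Q1 sb ab - TQ P Rr Rc γ g2 Q2 sb ab) ∧
      (1 : ℝ) = (1 / ε) * supN (fun sb ab => Q1 sb ab - Q2 sb ab)) ∧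
    (∀ T' : ((S × ℝ) → (A × ℝ) → ℝ × ℝ) → ((S × ℝ) → (A × ℝ) → ℝ × ℝ),
      (∀ Q, BoundedQ Q → ∃ g, IsSelection Q g ∧ T' Q = TQ P Rr Rc γ g Q) →
      ¬ ∃ L : ℝ, ∀ Qa Qb, BoundedQ Qa → BoundedQ Qb →
        supN (fun sb ab => T' Qa sb ab - T' Qb sb ab)
          ≤ L * supN (fun sb ab => Qa sb ab - Qb sb ab)) :=
  bellman_optimality_not_contraction_general P hP0 hP1 Rr Rc γ hγ0 a0 hA ε hε Q1 Q2 hQ1 hQ2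
end

section
/- Let X ⊂ ℝ² be finite and nonempty, with points written q = (q_c, q_r), and let β ∈ ℝ with min_{q∈X} q_c ≤ β. Let q* be any point of C²(X) that maximizes q_r over {q ∈ C²(X) : q_c ≤ β} and, among these maximizers, has minimal q_c. Then q* ∈ C²(Q⁻), where Q⁻ is the set of undominated points of X: every optimal point is a convex combination of at most two undominated points. -/
/-- `C²(X)`: convex combinations of at most two points of `X` (points of `ℝ²` are
written `q = (q_c, q_r)`, cost first, reward second). -/
def C2 (X : Set (ℝ × ℝ)) : Set (ℝ × ℝ) :=
  {p | ∃ q1 ∈ X, ∃ q2 ∈ X, ∃ l : ℝ, l ∈ Set.Icc (0 : ℝ) 1 ∧ p = (1 - l) • q1 + l • q2}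

/-- Top frontier of a set `Y ⊆ ℝ²`:
`{q ∈ Y | there is no q' ∈ Y with q'_c = q_c and q'_r > q_r}`. -/
def topFrontier (Y : Set (ℝ × ℝ)) : Set (ℝ × ℝ) :=
  {q ∈ Y | ¬ ∃ q' ∈ Y, q'.1 = q.1 ∧ q.2 < q'.2}

/-- `q` is the dominant point `q^±` of `X`: a point of `X` with minimal cost `q_c`
among those maximizing the reward `q_r` over `X`. -/
def IsDominant (X : Set (ℝ × ℝ)) (q : ℝ × ℝ) : Prop :=
  q ∈ X ∧ (∀ q' ∈ X, q'.2 ≤ q.2) ∧ (∀ q' ∈ X, q'.2 = q.2 → q.1 ≤ q'.1)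

/-- Undominated points `Q⁻ = X \ Q⁺` where `Q⁺ = {q ∈ X : q_c > q^±_c}`. -/
def Qminus (X : Set (ℝ × ℝ)) (qpm : ℝ × ℝ) : Set (ℝ × ℝ) :=
  X \ {q ∈ X | qpm.1 < q.1}

/-- Any point of `C²(X)` that maximizes `q_r` subject to `q_c ≤ β` and, among these
maximizers, has minimal `q_c`, is a convex combination of at most two undominated
points: `q* ∈ C²(Q⁻)`. -/
theorem optimal_point_mem_C2_undominated
    (X : Finset (ℝ × ℝ)) (hX : X.Nonempty) (β : ℝ)
    (hβ : ∃ q ∈ X, q.1 ≤ β)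
    (qpm : ℝ × ℝ) (hqpm : IsDominant (X : Set (ℝ × ℝ)) qpm)
    (qstar : ℝ × ℝ)
    (h1 : qstar ∈ C2 (X : Set (ℝ × ℝ))) (h2 : qstar.1 ≤ β)
    (h3 : ∀ q ∈ C2 (X : Set (ℝ × ℝ)), q.1 ≤ β → q.2 ≤ qstar.2)
    (h4 : ∀ q ∈ C2 (X : Set (ℝ × ℝ)), q.1 ≤ β → q.2 = qstar.2 → qstar.1 ≤ q.1) :
    qstar ∈ C2 (Qminus (X : Set (ℝ × ℝ)) qpm) := by
  obtain ⟨q1, hq1, q2, hq2, l, ⟨hl0, hl1⟩, hq⟩ := h1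
  obtain ⟨hqpmX, hdom, hmin⟩ := hqpm
  have hc : qstar.1 = (1 - l) * q1.1 + l * q2.1 := by rw [hq]; simp
  have hr : qstar.2 = (1 - l) * q1.2 + l * q2.2 := by rw [hq]; simp
  have hd1r := hdom q1 hq1
  have hd2r := hdom q2 hq2
  by_cases hd1 : qpm.1 < q1.1 <;> by_cases hd2 : qpm.1 < q2.1
  · -- both dominated: contradiction
    exfalso
    have hcs : qpm.1 < qstar.1 := by
      rw [hc]
      rcases eq_or_lt_of_le hl0 with h | h
      · rw [← h]; simpa using hd1
      · nlinarith [mul_pos h (sub_pos.mpr hd2),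
          mul_nonneg (by linarith : (0:ℝ) ≤ 1 - l) (sub_pos.mpr hd1).le]
    have hmem : qpm ∈ C2 (X : Set (ℝ × ℝ)) :=
      ⟨qpm, hqpmX, qpm, hqpmX, 0, ⟨le_refl 0, zero_le_one⟩, by simp⟩
    have hβ' : qpm.1 ≤ β := le_trans hcs.le h2
    have h3' := h3 qpm hmem hβ'
    have hr' : qpm.2 = qstar.2 := le_antisymm h3' (by rw [hr]; nlinarith)
    have := h4 qpm hmem hβ' hr'
    linarith
  · -- q1 dominated, q2 not
    set p := (1 - l) • qpm + l • q2 with hp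
    have hpc : p.1 = (1 - l) * qpm.1 + l * q2.1 := by simp [hp]
    have hpr : p.2 = (1 - l) * qpm.2 + l * q2.2 := by simp [hp]
    have hple : p.1 ≤ qstar.1 := by rw [hpc, hc]; nlinarith
    have hmem : p ∈ C2 (X : Set (ℝ × ℝ)) :=
      ⟨qpm, hqpmX, q2, hq2, l, ⟨hl0, hl1⟩, rfl⟩
    have hβ' : p.1 ≤ β := le_trans hple h2
    have h3' := h3 p hmem hβ'
    have hr' : p.2 = qstar.2 := le_antisymm h3' (by rw [hpr, hr]; nlinarith)
    have h4' := h4 p hmem hβ' hr'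
    have hl1' : l = 1 := by rw [hpc, hc] at h4'; nlinarith
    have hqs : qstar = q2 := by rw [hq, hl1']; simp
    exact ⟨q2, ⟨hq2, fun h => hd2 h.2⟩, q2, ⟨hq2, fun h => hd2 h.2⟩, 0,
      ⟨le_refl 0, zero_le_one⟩, by rw [hqs]; simp⟩
  · -- q2 dominated, q1 not
    set p := (1 - l) • q1 + l • qpm with hp
    have hpc : p.1 = (1 - l) * q1.1 + l * qpm.1 := by simp [hp]
    have hpr : p.2 = (1 - l) * q1.2 + l * qpm.2 := by simp [hp]
    have hple : p.1 ≤ qstar.1 := by rw [hpc, hc]; nlinarith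
    have hmem : p ∈ C2 (X : Set (ℝ × ℝ)) :=
      ⟨q1, hq1, qpm, hqpmX, l, ⟨hl0, hl1⟩, rfl⟩
    have hβ' : p.1 ≤ β := le_trans hple h2
    have h3' := h3 p hmem hβ'
    have hr' : p.2 = qstar.2 := le_antisymm h3' (by rw [hpr, hr]; nlinarith)
    have h4' := h4 p hmem hβ' hr'
    have hl0' : l = 0 := by rw [hpc, hc] at h4'; nlinarith
    have hqs : qstar = q1 := by rw [hq, hl0']; simp
    exact ⟨q1, ⟨hq1, fun h => hd1 h.2⟩, q1, ⟨hq1, fun h => hd1 h.2⟩, 0,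
      ⟨le_refl 0, zero_le_one⟩, by rw [hqs]; simp⟩
  · -- both undominated
    exact ⟨q1, ⟨hq1, fun h => hd1 h.2⟩, q2, ⟨hq2, fun h => hd2 h.2⟩, l, ⟨hl0, hl1⟩, hq⟩
end

section
/- Let X ⊂ ℝ² be finite and nonempty, with points written q = (q_c, q_r), let Q⁻ be its set of undominated points, and let β ∈ ℝ with min_{q∈X} q_c ≤ β. Let q* be any point of C²(X) that maximizes q_r over {q ∈ C²(X) : q_c ≤ β} and, among these maximizers, has minimal q_c. Then q* belongs to the top frontier F of C²(Q⁻), i.e. there is no q' ∈ C²(Q⁻) with q'_c = q*_c and q'_r > q*_r. -/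
/-- Any point of `C²(X)` that maximizes `q_r` subject to `q_c ≤ β` and, among these
maximizers, has minimal `q_c`, belongs to the top frontier `F` of `C²(Q⁻)`: there is
no `q' ∈ C²(Q⁻)` with `q'_c = q*_c` and `q'_r > q*_r`. -/
theorem optimal_point_mem_topFrontier
    (X : Finset (ℝ × ℝ)) (hX : X.Nonempty) (β : ℝ)
    (hβ : ∃ q ∈ X, q.1 ≤ β)
    (qpm : ℝ × ℝ) (hqpm : IsDominant (X : Set (ℝ × ℝ)) qpm)
    (qstar : ℝ × ℝ)
    (h1 : qstar ∈ C2 (X : Set (ℝ × ℝ))) (h2 : qstar.1 ≤ β)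
    (h3 : ∀ q ∈ C2 (X : Set (ℝ × ℝ)), q.1 ≤ β → q.2 ≤ qstar.2)
    (h4 : ∀ q ∈ C2 (X : Set (ℝ × ℝ)), q.1 ≤ β → q.2 = qstar.2 → qstar.1 ≤ q.1) :
    qstar ∈ topFrontier (C2 (Qminus (X : Set (ℝ × ℝ)) qpm)) := by
  obtain ⟨hqpmX, hqpm2, hqpm1⟩ := hqpm
  have hsub : Qminus (X : Set (ℝ × ℝ)) qpm ⊆ (X : Set (ℝ × ℝ)) := fun q hq => hq.1
  have hC2sub : C2 (Qminus (X : Set (ℝ × ℝ)) qpm) ⊆ C2 (X : Set (ℝ × ℝ)) := by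
    rintro p ⟨a, ha, b, hb, l, hl, rfl⟩
    exact ⟨a, hsub ha, b, hsub hb, l, hl, rfl⟩
  -- Key: in any 2-point representation of qstar, a dominated first point forces l = 1.
  have key : ∀ (a b : ℝ × ℝ) (l : ℝ), a ∈ (X : Set (ℝ × ℝ)) → b ∈ (X : Set (ℝ × ℝ)) →
      0 ≤ l → l ≤ 1 → qstar = (1 - l) • a + l • b → qpm.1 < a.1 → l = 1 := by
    intro a b l ha hb hl0 hl1 heq hdom
    set q' : ℝ × ℝ := (1 - l) • qpm + l • b with hq'
    have hq'C2 : q' ∈ C2 (X : Set (ℝ × ℝ)) := ⟨qpm, hqpmX, b, hb, l, ⟨hl0, hl1⟩, rfl⟩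
    have hc : q'.1 = qstar.1 + (1 - l) * (qpm.1 - a.1) := by
      simp [hq', heq, Prod.fst_add, Prod.smul_fst]; ring
    have hr : q'.2 = qstar.2 + (1 - l) * (qpm.2 - a.2) := by
      simp [hq', heq, Prod.snd_add, Prod.smul_snd]; ring
    have h1l : (0:ℝ) ≤ 1 - l := by linarith
    have hcle : q'.1 ≤ qstar.1 := by nlinarith
    have hrge : qstar.2 ≤ q'.2 := by nlinarith [hqpm2 a ha]
    have hβ' : q'.1 ≤ β := hcle.trans h2
    have hre : q'.2 = qstar.2 := le_antisymm (h3 q' hq'C2 hβ') hrge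
    have hce : qstar.1 ≤ q'.1 := h4 q' hq'C2 hβ' hre
    nlinarith
  have keymem : qstar ∈ C2 (Qminus (X : Set (ℝ × ℝ)) qpm) := by
    obtain ⟨q1, hq1, q2, hq2, l, ⟨hl0, hl1⟩, heq⟩ := h1
    have hmem : ∀ q : ℝ × ℝ, q ∈ (X : Set (ℝ × ℝ)) → ¬ qpm.1 < q.1 →
        q ∈ Qminus (X : Set (ℝ × ℝ)) qpm := by
      intro q hq hle
      exact ⟨hq, fun h => hle h.2⟩
    by_cases hd1 : qpm.1 < q1.1
    · have hl : l = 1 := key q1 q2 l hq1 hq2 hl0 hl1 heq hd1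
      have heq2 : qstar = q2 := by subst hl; simpa using heq
      by_cases hd2 : qpm.1 < q2.1
      · have heq3 : qstar = (1 - (0:ℝ)) • q2 + (0:ℝ) • q2 := by simpa using heq2
        have : (0:ℝ) = 1 := key q2 q2 0 hq2 hq2 le_rfl zero_le_one heq3 hd2
        norm_num at this
      · exact ⟨q2, hmem q2 hq2 hd2, q2, hmem q2 hq2 hd2, 0,
          ⟨le_rfl, zero_le_one⟩, by simpa using heq2⟩
    · by_cases hd2 : qpm.1 < q2.1
      · have heq' : qstar = (1 - (1 - l)) • q2 + (1 - l) • q1 := by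
          rw [heq]; ring_nf
        have hl : 1 - l = 1 := key q2 q1 (1 - l) hq2 hq1 (by linarith) (by linarith) heq' hd2
        have hl' : l = 0 := by linarith
        have heq1 : qstar = q1 := by subst hl'; simpa using heq
        exact ⟨q1, hmem q1 hq1 hd1, q1, hmem q1 hq1 hd1, 0,
          ⟨le_rfl, zero_le_one⟩, by simpa using heq1⟩
      · exact ⟨q1, hmem q1 hq1 hd1, q2, hmem q2 hq2 hd2, l, ⟨hl0, hl1⟩, heq⟩
  refine ⟨keymem, ?_⟩
  rintro ⟨q', hq'M, hc, hr⟩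
  have := h3 q' (hC2sub hq'M) (hc ▸ h2)
  linarith
end

section
/- Let X ⊂ ℝ² be a finite nonempty set of points written q = (q_c, q_r), and let F be the top frontier of C²(X). Then F is the graph of a concave function: for all q¹, q², q³ ∈ F with q¹_c ≤ q²_c ≤ q³_c and for λ ∈ [0,1] such that q²_c = (1−λ)q¹_c + λq³_c, one has q²_r ≥ (1−λ)q¹_r + λq³_r. -/
open Set

def vertLowerClosure (Y : Set (ℝ × ℝ)) : Set (ℝ × ℝ) :=
  {p | ∃ q ∈ Y, q.1 = p.1 ∧ p.2 ≤ q.2}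

section vertLowerClosure

variable {Y Z : Set (ℝ × ℝ)}

theorem subset_vertLowerClosure : Y ⊆ vertLowerClosure Y :=
  fun p hp => ⟨p, hp, rfl, le_rfl⟩

theorem vertLowerClosure_mono (h : Y ⊆ Z) : vertLowerClosure Y ⊆ vertLowerClosure Z :=
  fun _ ⟨q, hq, hq1, hq2⟩ => ⟨q, h hq, hq1, hq2⟩

theorem mem_vertLowerClosure_of_le {p p' : ℝ × ℝ} (hp' : p' ∈ vertLowerClosure Y)
    (h1 : p'.1 = p.1) (h2 : p.2 ≤ p'.2) : p ∈ vertLowerClosure Y :=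
  let ⟨q, hq, hq1, hq2⟩ := hp'
  ⟨q, hq, hq1.trans h1, h2.trans hq2⟩

theorem snd_le_of_mem_topFrontier {p q : ℝ × ℝ} (hq : q ∈ topFrontier Y)
    (hp : p ∈ vertLowerClosure Y) (h : p.1 = q.1) : p.2 ≤ q.2 := by
  obtain ⟨r, hr, hr1, hpr⟩ := hp
  exact hpr.trans (not_lt.1 fun hlt => hq.2 ⟨r, hr, hr1.trans h, hlt⟩)

end vertLowerClosure

theorem mem_vertLowerClosure_segment {a b : ℝ × ℝ} {c y : ℝ} (hac : a.1 ≤ c) (hcb : c ≤ b.1)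
    (hab : a.1 < b.1) (h : (b.1 - a.1) * y ≤ (b.1 - c) * a.2 + (c - a.1) * b.2) :
    (c, y) ∈ vertLowerClosure (segment ℝ a b) := by
  have hd : 0 < b.1 - a.1 := sub_pos.2 hab
  refine ⟨((b.1 - c) / (b.1 - a.1)) • a + ((c - a.1) / (b.1 - a.1)) • b,
    ⟨_, _, div_nonneg (by linarith) hd.le, div_nonneg (by linarith) hd.le, ?_, rfl⟩, ?_, ?_⟩
  · field_simp
    ring
  · simp only [Prod.fst_add, Prod.smul_fst, smul_eq_mul]
    field_simp
    ring
  · simp only [Prod.snd_add, Prod.smul_snd, smul_eq_mul]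
    rw [div_mul_eq_mul_div, div_mul_eq_mul_div, ← add_div, le_div_iff₀ hd]
    linarith

section C2

variable {X Y : Set (ℝ × ℝ)}

theorem mem_C2_iff {p : ℝ × ℝ} : p ∈ C2 X ↔ ∃ a ∈ X, ∃ b ∈ X, p ∈ segment ℝ a b := by
  simp only [segment_eq_image, mem_image, eq_comm]
  rfl

theorem segment_subset_C2 {a b : ℝ × ℝ} (ha : a ∈ X) (hb : b ∈ X) : segment ℝ a b ⊆ C2 X :=
  fun _ hp => mem_C2_iff.2 ⟨a, ha, b, hb, hp⟩

theorem subset_C2 : X ⊆ C2 X := fun a ha =>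
  segment_subset_C2 ha ha (left_mem_segment ℝ a a)

theorem C2_mono (h : X ⊆ Y) : C2 X ⊆ C2 Y := fun _ hp =>
  let ⟨_, ha, _, hb, hp⟩ := mem_C2_iff.1 hp
  segment_subset_C2 (h ha) (h hb) hp

theorem C2_subset_convexHull : C2 X ⊆ convexHull ℝ X := fun _ hp =>
  let ⟨_, ha, _, hb, hp⟩ := mem_C2_iff.1 hp
  segment_subset_convexHull ha hb hp

end C2

theorem smul_add_smul_add_smul_mem_vertLowerClosure_C2_of_sorted {x1 x2 x3 : ℝ × ℝ}
    (h12 : x1.1 ≤ x2.1) (h23 : x2.1 ≤ x3.1) {l1 l2 l3 : ℝ} (hl1 : 0 ≤ l1) (hl2 : 0 ≤ l2)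
    (hl3 : 0 ≤ l3) (hsum : l1 + l2 + l3 = 1) :
    l1 • x1 + l2 • x2 + l3 • x3 ∈ vertLowerClosure (C2 {x1, x2, x3}) := by
  obtain ⟨c, hc⟩ : ∃ c, c = l1 * x1.1 + l2 * x2.1 + l3 * x3.1 := ⟨_, rfl⟩
  obtain ⟨y, hy⟩ : ∃ y, y = l1 * x1.2 + l2 * x2.2 + l3 * x3.2 := ⟨_, rfl⟩
  have hp : l1 • x1 + l2 • x2 + l3 • x3 = (c, y) := by ext <;> simp [hc, hy]
  rw [hp]
  have hx1 : x1 ∈ ({x1, x2, x3} : Set (ℝ × ℝ)) := by simp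
  have hx2 : x2 ∈ ({x1, x2, x3} : Set (ℝ × ℝ)) := by simp
  have hx3 : x3 ∈ ({x1, x2, x3} : Set (ℝ × ℝ)) := by simp
  have h1c : x1.1 ≤ c := by
    linear_combination -hc + mul_nonneg hl2 (sub_nonneg.2 h12) +
      mul_nonneg hl3 (sub_nonneg.2 (h12.trans h23)) - x1.1 * hsum
  have hc3 : c ≤ x3.1 := by
    linear_combination hc + mul_nonneg hl1 (sub_nonneg.2 (h12.trans h23)) +
      mul_nonneg hl2 (sub_nonneg.2 h23) + x3.1 * hsum
  rcases (h12.trans h23).eq_or_lt with h13 | h13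
  · obtain ⟨x, hx, hmax⟩ := exists_max_image _ Prod.snd (toFinite _) ⟨x1, hx1⟩
    refine mem_vertLowerClosure_of_le (subset_vertLowerClosure (subset_C2 hx)) ?_ ?_
    · have hc1 : c = x1.1 := by
        have h21 : x2.1 = x1.1 := le_antisymm (h13 ▸ h23) h12
        rw [hc, h21, ← h13]
        linear_combination x1.1 * hsum
      rcases hx with rfl | rfl | rfl <;> linarith
    · linear_combination hy + mul_le_mul_of_nonneg_left (hmax x1 hx1) hl1 +
        mul_le_mul_of_nonneg_left (hmax x2 hx2) hl2 + mul_le_mul_of_nonneg_left (hmax x3 hx3) hl3 +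
        x.2 * hsum
  -- `D > 0` iff `x2` lies above the chord `x1 x3`; the chord through two of the points then
  -- clears `(c, y)` by the weight of the third point times `± D`.
  obtain ⟨D, hD⟩ : ∃ D, D = (x3.1 - x1.1) * (x2.2 - x1.2) - (x2.1 - x1.1) * (x3.2 - x1.2) :=
    ⟨_, rfl⟩
  rcases le_total D 0 with hD0 | hD0
  · refine vertLowerClosure_mono (segment_subset_C2 hx1 hx3)
      (mem_vertLowerClosure_segment h1c hc3 h13 ?_)
    subst hc hy hD
    linear_combination mul_nonpos_of_nonneg_of_nonpos hl2 hD0 + (x3.1 * x1.2 - x1.1 * x3.2) * hsum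
  by_cases h : x1.1 < x2.1 ∧ c ≤ x2.1
  · refine vertLowerClosure_mono (segment_subset_C2 hx1 hx2)
      (mem_vertLowerClosure_segment h1c h.2 h.1 ?_)
    subst hc hy hD
    linear_combination mul_nonneg hl3 hD0 + (x2.1 * x1.2 - x1.1 * x2.2) * hsum
  · have h2c : x2.1 ≤ c ∧ x2.1 < x3.1 := by
      rcases not_and_or.1 h with h | h <;> constructor <;> linarith
    refine vertLowerClosure_mono (segment_subset_C2 hx2 hx3)
      (mem_vertLowerClosure_segment h2c.1 hc3 h2c.2 ?_)
    subst hc hy hD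
    linear_combination mul_nonneg hl1 hD0 + (x3.1 * x2.2 - x2.1 * x3.2) * hsum

theorem smul_add_smul_add_smul_mem_vertLowerClosure_C2 (x1 x2 x3 : ℝ × ℝ) {l1 l2 l3 : ℝ}
    (hl1 : 0 ≤ l1) (hl2 : 0 ≤ l2) (hl3 : 0 ≤ l3) (hsum : l1 + l2 + l3 = 1) :
    l1 • x1 + l2 • x2 + l3 • x3 ∈ vertLowerClosure (C2 {x1, x2, x3}) := by
  wlog h13 : x1.1 ≤ x3.1 generalizing x1 x3 l1 l3
  · have h := this x3 x1 hl3 hl1 (by linarith) (by linarith)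
    rwa [show l3 • x3 + l2 • x2 + l1 • x1 = l1 • x1 + l2 • x2 + l3 • x3 by abel,
      show ({x3, x2, x1} : Set (ℝ × ℝ)) = {x1, x2, x3} by
        rw [insert_comm, pair_comm, insert_comm]] at h
  wlog h12 : x1.1 ≤ x2.1 generalizing x1 x2 l1 l2
  · have h := this x1 hl1 x2 hl2 (by linarith) (by linarith) (by linarith)
    rwa [show l2 • x2 + l1 • x1 + l3 • x3 = l1 • x1 + l2 • x2 + l3 • x3 by abel,
      insert_comm] at h
  wlog h23 : x2.1 ≤ x3.1 generalizing x2 x3 l2 l3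
  · have h := this x2 hl2 x3 hl3 (by linarith) h12 h13 (by linarith)
    rwa [show l1 • x1 + l3 • x3 + l2 • x2 = l1 • x1 + l2 • x2 + l3 • x3 by abel,
      pair_comm] at h
  exact smul_add_smul_add_smul_mem_vertLowerClosure_C2_of_sorted h12 h23 hl1 hl2 hl3 hsum

theorem convexHull_finset_subset_vertLowerClosure_C2 (X : Finset (ℝ × ℝ)) :
    convexHull ℝ (X : Set (ℝ × ℝ)) ⊆ vertLowerClosure (C2 X) := by
  induction X using Finset.induction_on with
  | empty => simp
  | insert x s _ ih =>
    rw [Finset.coe_insert]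
    rcases s.eq_empty_or_nonempty with rfl | hs
    · simpa using subset_vertLowerClosure (subset_C2 (mem_singleton x))
    intro p hp
    rw [convexHull_insert (Finset.coe_nonempty.2 hs), convexJoin_singleton_left, mem_iUnion₂] at hp
    obtain ⟨z, hz, a, b, ha, hb, hab, rfl⟩ := hp
    obtain ⟨q, hq, hqz, hzq⟩ := ih hz
    obtain ⟨c, hc, d, hd, μ, ν, hμ, hν, hμν, rfl⟩ := mem_C2_iff.1 hq
    have key := smul_add_smul_add_smul_mem_vertLowerClosure_C2 x c d ha (mul_nonneg hb hμ)
      (mul_nonneg hb hν) (by linear_combination hab + b * hμν)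
    refine mem_vertLowerClosure_of_le
      (vertLowerClosure_mono (C2_mono (insert_subset_insert (pair_subset hc hd))) key) ?_ ?_
    · simp only [Prod.fst_add, Prod.smul_fst, smul_eq_mul] at hqz ⊢
      linear_combination b * hqz
    · simp only [Prod.snd_add, Prod.smul_snd, smul_eq_mul] at hzq ⊢
      linear_combination mul_le_mul_of_nonneg_left hzq hb

theorem convexHull_subset_vertLowerClosure_C2 (X : Set (ℝ × ℝ)) :
    convexHull ℝ X ⊆ vertLowerClosure (C2 X) := by
  rw [convexHull_eq_union_convexHull_finite_subsets]
  exact iUnion₂_subset fun t ht =>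
    (convexHull_finset_subset_vertLowerClosure_C2 t).trans (vertLowerClosure_mono (C2_mono ht))

theorem topFrontier_concave_general (X : Finset (ℝ × ℝ)) :
    ∀ q1 ∈ topFrontier (C2 (X : Set (ℝ × ℝ))),
    ∀ q2 ∈ topFrontier (C2 (X : Set (ℝ × ℝ))),
    ∀ q3 ∈ topFrontier (C2 (X : Set (ℝ × ℝ))),
      q1.1 ≤ q2.1 → q2.1 ≤ q3.1 →
      ∀ l ∈ Set.Icc (0 : ℝ) 1, q2.1 = (1 - l) * q1.1 + l * q3.1 →
        (1 - l) * q1.2 + l * q3.2 ≤ q2.2 := by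
  rintro q1 hq1 q2 hq2 q3 hq3 - - l ⟨hl0, hl1⟩ hq2c
  have hmem : (1 - l) • q1 + l • q3 ∈ convexHull ℝ (X : Set (ℝ × ℝ)) :=
    convex_convexHull ℝ _ (C2_subset_convexHull hq1.1) (C2_subset_convexHull hq3.1)
      (sub_nonneg.2 hl1) hl0 (sub_add_cancel 1 l)
  simpa using snd_le_of_mem_topFrontier hq2 (convexHull_subset_vertLowerClosure_C2 _ hmem)
    (by simpa using hq2c.symm)

/-- The top frontier `F` of `C²(X)` is the graph of a concave function: for all
`q¹, q², q³ ∈ F` with `q¹_c ≤ q²_c ≤ q³_c` and `λ ∈ [0,1]` such that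
`q²_c = (1−λ)q¹_c + λq³_c`, one has `q²_r ≥ (1−λ)q¹_r + λq³_r`. -/
theorem topFrontier_concave (X : Finset (ℝ × ℝ)) (hX : X.Nonempty) :
    ∀ q1 ∈ topFrontier (C2 (X : Set (ℝ × ℝ))),
    ∀ q2 ∈ topFrontier (C2 (X : Set (ℝ × ℝ))),
    ∀ q3 ∈ topFrontier (C2 (X : Set (ℝ × ℝ))),
      q1.1 ≤ q2.1 → q2.1 ≤ q3.1 →
      ∀ l ∈ Set.Icc (0 : ℝ) 1, q2.1 = (1 - l) * q1.1 + l * q3.1 →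
        (1 - l) * q1.2 + l * q3.2 ≤ q2.2 :=
  topFrontier_concave_general X
end

section
/- Let A be a finite nonempty set, L ≥ 0, and q : A → ℝ² with coordinates q(a) = (q_c(a), q_r(a)), such that |q_r(a₁) − q_r(a₂)| ≤ L|q_c(a₁) − q_c(a₂)| for all a₁, a₂ ∈ A. Then the top frontier F of C²(q(A)) is the graph of an L-Lipschitz function: for all p¹, p² ∈ F, |p¹_r − p²_r| ≤ L|p¹_c − p²_c|. -/
section Aux

variable {A : Type} (L : ℝ) (q : A → ℝ × ℝ)

lemma seg_fst (x y : ℝ × ℝ) (t : ℝ) : ((1 - t) • x + t • y).1 = (1 - t) * x.1 + t * y.1 := rfl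

lemma seg_snd (x y : ℝ × ℝ) (t : ℝ) : ((1 - t) • x + t • y).2 = (1 - t) * x.2 + t * y.2 := rfl

lemma mem_C2 (a b : A) {t : ℝ} (ht : t ∈ Set.Icc (0 : ℝ) 1) :
    (1 - t) • q a + t • q b ∈ C2 (Set.range q) :=
  ⟨q a, ⟨a, rfl⟩, q b, ⟨b, rfl⟩, t, ht, rfl⟩

lemma frontier_le {Y : Set (ℝ × ℝ)} {p z : ℝ × ℝ} (hp : p ∈ topFrontier Y)
    (hz : z ∈ Y) (hz1 : z.1 = p.1) : z.2 ≤ p.2 := by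
  by_contra hlt
  exact hp.2 ⟨z, hz, hz1, lt_of_not_ge hlt⟩

lemma seg_lip (h : ∀ a1 a2 : A, |(q a1).2 - (q a2).2| ≤ L * |(q a1).1 - (q a2).1|)
    (a b : A) (s t : ℝ) :
    |((1 - s) • q a + s • q b).2 - ((1 - t) • q a + t • q b).2|
      ≤ L * |((1 - s) • q a + s • q b).1 - ((1 - t) • q a + t • q b).1| := by
  rw [seg_fst, seg_fst, seg_snd, seg_snd]
  have e2 : (1 - s) * (q a).2 + s * (q b).2 - ((1 - t) * (q a).2 + t * (q b).2)
      = (s - t) * ((q b).2 - (q a).2) := by ring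
  have e1 : (1 - s) * (q a).1 + s * (q b).1 - ((1 - t) * (q a).1 + t * (q b).1)
      = (s - t) * ((q b).1 - (q a).1) := by ring
  rw [e1, e2, abs_mul, abs_mul]
  calc |s - t| * |(q b).2 - (q a).2| ≤ |s - t| * (L * |(q b).1 - (q a).1|) :=
        mul_le_mul_of_nonneg_left (h b a) (abs_nonneg _)
    _ = L * (|s - t| * |(q b).1 - (q a).1|) := by ring

/-- If `p` is on the top frontier and the segment from generator `c` to generator `e`
crosses the vertical line at `p.1`, then `p` dominates `c` up to `L * |p.1 - c.1|`. -/
lemma gen_bound_seg (h : ∀ a1 a2 : A, |(q a1).2 - (q a2).2| ≤ L * |(q a1).1 - (q a2).1|)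
    {p : ℝ × ℝ} (hp : p ∈ topFrontier (C2 (Set.range q))) (c e : A)
    (hseg : p.1 ∈ segment ℝ (q c).1 (q e).1) :
    (q c).2 - L * |p.1 - (q c).1| ≤ p.2 := by
  obtain ⟨u, v, hu, hv, huv, hx⟩ := hseg
  rw [smul_eq_mul, smul_eq_mul] at hx
  have hv1 : v ∈ Set.Icc (0 : ℝ) 1 := ⟨hv, by linarith⟩
  have hzC : (1 - v) • q c + v • q e ∈ C2 (Set.range q) := mem_C2 q c e hv1
  have hz1 : ((1 - v) • q c + v • q e).1 = p.1 := by
    rw [seg_fst]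
    have huv' : (1 : ℝ) - v = u := by linarith
    rw [huv', hx]
  have hz2 : ((1 - v) • q c + v • q e).2 ≤ p.2 := frontier_le hp hzC hz1
  have hlip := seg_lip L q h c e v 0
  have hend : (1 - (0 : ℝ)) • q c + (0 : ℝ) • q e = q c := by
    norm_num
  rw [hend, hz1] at hlip
  have hneg := neg_abs_le (((1 - v) • q c + v • q e).2 - (q c).2)
  linarith

/-- Any frontier point `p` dominates any generator `c` up to `L * |p.1 - c.1|`. -/
lemma gen_bound (h : ∀ a1 a2 : A, |(q a1).2 - (q a2).2| ≤ L * |(q a1).1 - (q a2).1|)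
    {p : ℝ × ℝ} (hp : p ∈ topFrontier (C2 (Set.range q))) (c : A) :
    (q c).2 - L * |p.1 - (q c).1| ≤ p.2 := by
  obtain ⟨x, ⟨a, rfl⟩, y, ⟨b, rfl⟩, lam, hlam, hpe⟩ := hp.1
  have hp1 : p.1 = (1 - lam) * (q a).1 + lam * (q b).1 := by rw [hpe, seg_fst]
  -- p.1 lies between (q a).1 and (q b).1
  have hmem : ∀ d : A, ((q d).1 ≤ p.1 ∨ p.1 ≤ (q d).1) →
      (((q a).1 ≤ p.1 ∧ p.1 ≤ (q b).1) ∨ ((q b).1 ≤ p.1 ∧ p.1 ≤ (q a).1) ∨ True) := by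
    intro _ _; right; right; trivial
  rcases le_total (q c).1 p.1 with hc | hc
  · -- need an endpoint with cost ≥ p.1
    rcases le_total (q a).1 (q b).1 with hab | hab
    · have hup : p.1 ≤ (q b).1 := by rw [hp1]; nlinarith [hlam.1, hlam.2]
      exact gen_bound_seg L q h hp c b (by rw [segment_eq_uIcc, Set.mem_uIcc]; exact Or.inl ⟨hc, hup⟩)
    · have hup : p.1 ≤ (q a).1 := by rw [hp1]; nlinarith [hlam.1, hlam.2]
      exact gen_bound_seg L q h hp c a (by rw [segment_eq_uIcc, Set.mem_uIcc]; exact Or.inl ⟨hc, hup⟩)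
  · -- need an endpoint with cost ≤ p.1
    rcases le_total (q a).1 (q b).1 with hab | hab
    · have hdn : (q a).1 ≤ p.1 := by rw [hp1]; nlinarith [hlam.1, hlam.2]
      exact gen_bound_seg L q h hp c a (by rw [segment_eq_uIcc, Set.mem_uIcc]; exact Or.inr ⟨hdn, hc⟩)
    · have hdn : (q b).1 ≤ p.1 := by rw [hp1]; nlinarith [hlam.1, hlam.2]
      exact gen_bound_seg L q h hp c b (by rw [segment_eq_uIcc, Set.mem_uIcc]; exact Or.inr ⟨hdn, hc⟩)

/-- One-sided Lipschitz bound between two frontier points. -/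
lemma key_bound (h : ∀ a1 a2 : A, |(q a1).2 - (q a2).2| ≤ L * |(q a1).1 - (q a2).1|)
    {p1 p2 : ℝ × ℝ} (hp1 : p1 ∈ topFrontier (C2 (Set.range q)))
    (hp2 : p2 ∈ topFrontier (C2 (Set.range q))) :
    p1.2 - p2.2 ≤ L * |p1.1 - p2.1| := by
  obtain ⟨x, ⟨a, rfl⟩, y, ⟨b, rfl⟩, lam, hlam, hpe⟩ := hp1.1
  have hc1 : p1.1 = (1 - lam) * (q a).1 + lam * (q b).1 := by rw [hpe, seg_fst]
  by_cases hin : p2.1 ∈ segment ℝ (q a).1 (q b).1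
  · -- p2's cost is within the cost range of p1's segment
    obtain ⟨u, v, hu, hv, huv, hx⟩ := hin
    rw [smul_eq_mul, smul_eq_mul] at hx
    have hv1 : v ∈ Set.Icc (0 : ℝ) 1 := ⟨hv, by linarith⟩
    have hz1 : ((1 - v) • q a + v • q b).1 = p2.1 := by
      rw [seg_fst]
      have huv' : (1 : ℝ) - v = u := by linarith
      rw [huv', hx]
    have hz2 : ((1 - v) • q a + v • q b).2 ≤ p2.2 :=
      frontier_le hp2 (mem_C2 q a b hv1) hz1
    have hlip := seg_lip L q h a b lam v
    rw [hz1, ← hpe] at hlip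
    have habs := le_abs_self (p1.2 - ((1 - v) • q a + v • q b).2)
    linarith
  · -- p2's cost is outside; go through the endpoint of p1's segment closest to p2
    rw [segment_eq_uIcc, Set.mem_uIcc] at hin
    push_neg at hin
    have hlow : min (q a).1 (q b).1 ≤ p1.1 := by
      rcases le_total (q a).1 (q b).1 with hab | hab
      · rw [min_eq_left hab, hc1]; nlinarith [hlam.1, hlam.2]
      · rw [min_eq_right hab, hc1]; nlinarith [hlam.1, hlam.2]
    have hhigh : p1.1 ≤ max (q a).1 (q b).1 := by
      rcases le_total (q a).1 (q b).1 with hab | hab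
      · rw [max_eq_right hab, hc1]; nlinarith [hlam.1, hlam.2]
      · rw [max_eq_left hab, hc1]; nlinarith [hlam.1, hlam.2]
    have hout : p2.1 < min (q a).1 (q b).1 ∨ max (q a).1 (q b).1 < p2.1 := by
      by_contra hcon
      push_neg at hcon
      rcases le_total (q a).1 (q b).1 with hab | hab
      · rw [min_eq_left hab] at hcon
        rw [max_eq_right hab] at hcon
        exact absurd hcon.2 (not_le.mpr (hin.1 hcon.1))
      · rw [min_eq_right hab] at hcon
        rw [max_eq_left hab] at hcon
        exact absurd hcon.2 (not_le.mpr (hin.2 hcon.1))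
    -- endpoint lemma applier
    have main : ∀ e : A,
        |p1.2 - (q e).2| ≤ L * |p1.1 - (q e).1| →
        ((p1.1 ≤ (q e).1 ∧ (q e).1 ≤ p2.1) ∨ (p2.1 ≤ (q e).1 ∧ (q e).1 ≤ p1.1)) →
        p1.2 - p2.2 ≤ L * |p1.1 - p2.1| := by
      intro e hyp1 hbe
      have hg := gen_bound L q h hp2 e
      have habs := le_abs_self (p1.2 - (q e).2)
      rcases hbe with ⟨hA, hB⟩ | ⟨hA, hB⟩
      · rw [abs_of_nonpos (by linarith : p1.1 - (q e).1 ≤ 0)] at hyp1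
        rw [abs_of_nonneg (by linarith : (0:ℝ) ≤ p2.1 - (q e).1)] at hg
        rw [abs_of_nonpos (by linarith : p1.1 - p2.1 ≤ 0)]
        linarith
      · rw [abs_of_nonneg (by linarith : (0:ℝ) ≤ p1.1 - (q e).1)] at hyp1
        rw [abs_of_nonpos (by linarith : p2.1 - (q e).1 ≤ 0)] at hg
        rw [abs_of_nonneg (by linarith : (0:ℝ) ≤ p1.1 - p2.1)]
        linarith
    have henda : (1 - (0 : ℝ)) • q a + (0 : ℝ) • q b = q a := by norm_num
    have hendb : (1 - (1 : ℝ)) • q a + (1 : ℝ) • q b = q b := by norm_num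
    have hlipa : |p1.2 - (q a).2| ≤ L * |p1.1 - (q a).1| := by
      have := seg_lip L q h a b lam 0
      rw [henda, ← hpe] at this; exact this
    have hlipb : |p1.2 - (q b).2| ≤ L * |p1.1 - (q b).1| := by
      have := seg_lip L q h a b lam 1
      rw [hendb, ← hpe] at this; exact this
    rcases hout with hsmall | hbig
    · -- p2.1 below the min-cost endpoint
      rcases le_total (q a).1 (q b).1 with hab | hab
      · refine main a hlipa (Or.inr ⟨le_of_lt (lt_of_lt_of_le hsmall (min_le_left _ _)), ?_⟩)
        rw [min_eq_left hab] at hlow; linarith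
      · refine main b hlipb (Or.inr ⟨le_of_lt (lt_of_lt_of_le hsmall (min_le_right _ _)), ?_⟩)
        rw [min_eq_right hab] at hlow; linarith
    · -- p2.1 above the max-cost endpoint
      rcases le_total (q a).1 (q b).1 with hab | hab
      · refine main b hlipb (Or.inl ⟨?_, le_of_lt (lt_of_le_of_lt (le_max_right _ _) hbig)⟩)
        rw [max_eq_right hab] at hhigh; linarith
      · refine main a hlipa (Or.inl ⟨?_, le_of_lt (lt_of_le_of_lt (le_max_left _ _) hbig)⟩)
        rw [max_eq_left hab] at hhigh; linarith

end Aux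

/-- If the value points `q(a) = (q_c(a), q_r(a))` satisfy
`|q_r(a₁) − q_r(a₂)| ≤ L|q_c(a₁) − q_c(a₂)|` for all `a₁, a₂`, then the top frontier
`F` of `C²(q(A))` is the graph of an `L`-Lipschitz function: for all `p¹, p² ∈ F`,
`|p¹_r − p²_r| ≤ L|p¹_c − p²_c|`. -/
theorem topFrontier_lipschitz {A : Type} [Fintype A] [Nonempty A]
    (L : ℝ) (hL : 0 ≤ L) (q : A → ℝ × ℝ)
    (h : ∀ a1 a2 : A, |(q a1).2 - (q a2).2| ≤ L * |(q a1).1 - (q a2).1|) :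
    ∀ p1 ∈ topFrontier (C2 (Set.range q)),
    ∀ p2 ∈ topFrontier (C2 (Set.range q)),
      |p1.2 - p2.2| ≤ L * |p1.1 - p2.1| := by
  intro p1 hp1 p2 hp2
  have k1 := key_bound L q h hp1 hp2
  have k2 := key_bound L q h hp2 hp1
  rw [abs_sub_comm p2.1 p1.1] at k2
  rw [abs_sub_le_iff]
  exact ⟨k1, k2⟩
end
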